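/- Let n ≥ 1 and r be natural numbers with r ≤ n, let i : Fin r → ℕ satisfy 1 ≤ i(α) ≤ n for every α, and let D be a real number with D ≥ 4. Then ∏_{α} ( ∑_{j=0}^{i(α)} (choose (n−j) (i(α)−j)) · (2/D)^{i(α)−j} ) ≤ 2^{n²}. -/
import Mathlib

lemma coeff_sum_le (n m : ℕ) (hm : m ≤ n) (D : ℝ) (hD : 4 ≤ D) :
    ∑ j ∈ Finset.range (m + 1),
        (Nat.choose (n - j) (m - j) : ℝ) * (2 / D) ^ (m - j) ≤ 2 ^ n := by
  have hD0 : (0:ℝ) < D := by linarith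
  have ht0 : (0:ℝ) ≤ 2 / D := by positivity
  have ht : 2 / D ≤ 1 / 2 := by
    rw [div_le_div_iff₀ hD0 (by norm_num)]; linarith
  have step1 : ∑ j ∈ Finset.range (m + 1),
      (Nat.choose (n - j) (m - j) : ℝ) * (2 / D) ^ (m - j)
      ≤ ∑ j ∈ Finset.range (m + 1),
        (Nat.choose n (m - j) : ℝ) * (1 / 2 : ℝ) ^ (m - j) := by
    apply Finset.sum_le_sum
    intro j _
    apply mul_le_mul
    · exact_mod_cast Nat.choose_le_choose _ (Nat.sub_le n j)
    · exact pow_le_pow_left₀ ht0 ht _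
    · positivity
    · positivity
  have step2 : ∑ j ∈ Finset.range (m + 1),
      (Nat.choose n (m - j) : ℝ) * (1 / 2 : ℝ) ^ (m - j)
      = ∑ k ∈ Finset.range (m + 1),
        (Nat.choose n k : ℝ) * (1 / 2 : ℝ) ^ k := by
    have := Finset.sum_range_reflect
      (fun k => (Nat.choose n k : ℝ) * (1 / 2 : ℝ) ^ k) (m + 1)
    simpa using this
  have step3 : ∑ k ∈ Finset.range (m + 1),
      (Nat.choose n k : ℝ) * (1 / 2 : ℝ) ^ k
      ≤ ∑ k ∈ Finset.range (n + 1),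
        (Nat.choose n k : ℝ) * (1 / 2 : ℝ) ^ k := by
    apply Finset.sum_le_sum_of_subset_of_nonneg
    · exact Finset.range_subset_range.2 (by omega)
    · intro k _ _; positivity
  have step4 : ∑ k ∈ Finset.range (n + 1),
      (Nat.choose n k : ℝ) * (1 / 2 : ℝ) ^ k = (3 / 2 : ℝ) ^ n := by
    have := add_pow (1 / 2 : ℝ) 1 n
    norm_num at this
    rw [this]
    exact Finset.sum_congr rfl fun k _ => by ring
  have step5 : (3 / 2 : ℝ) ^ n ≤ 2 ^ n :=
    pow_le_pow_left₀ (by norm_num) (by norm_num) n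
  linarith

/-- For a multi-index `i : Fin r → ℕ` with entries in `[1, n]`, `r ≤ n`, `1 ≤ n`,
and a real `D ≥ 4`, the product of the coefficient sums
`∑_{j=0}^{i α} C(n-j, i α - j) (2/D)^(i α - j)` is bounded by `2 ^ (n²)`. -/
theorem coeff_product_le (n r : ℕ) (hn : 1 ≤ n) (hr : r ≤ n)
    (i : Fin r → ℕ) (hi : ∀ α : Fin r, 1 ≤ i α ∧ i α ≤ n)
    (D : ℝ) (hD : 4 ≤ D) :
    ∏ α : Fin r,
        ∑ j ∈ Finset.range (i α + 1),
          (Nat.choose (n - j) (i α - j) : ℝ) * (2 / D) ^ (i α - j)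
      ≤ 2 ^ (n ^ 2) := by
  have hD0 : (0:ℝ) < D := by linarith
  have h1 : ∏ α : Fin r,
      (∑ j ∈ Finset.range (i α + 1),
        (Nat.choose (n - j) (i α - j) : ℝ) * (2 / D) ^ (i α - j))
      ≤ ∏ _α : Fin r, (2 : ℝ) ^ n := by
    apply Finset.prod_le_prod
    · intro α _
      apply Finset.sum_nonneg
      intro j _; positivity
    · intro α _
      exact coeff_sum_le n (i α) (hi α).2 D hD
  have h2 : ∏ _α : Fin r, (2 : ℝ) ^ n = 2 ^ (n * r) := by
    rw [Finset.prod_const, Finset.card_univ, Fintype.card_fin, ← pow_mul]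
  have h3 : (2 : ℝ) ^ (n * r) ≤ 2 ^ (n ^ 2) := by
    apply pow_le_pow_right₀ (by norm_num)
    nlinarith
  calc _ ≤ ∏ _α : Fin r, (2 : ℝ) ^ n := h1
    _ = 2 ^ (n * r) := h2
    _ ≤ 2 ^ (n ^ 2) := h3
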